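/- arXiv:1809.02243 — 2 statements merged into one kernel-verified Lean document; each statement's English description precedes it below -/
import Mathlib

section
/- Assume J positive, strictly decreasing, and 0 < h < ∑_{n=1}^{N-1} J(n). For every configuration σ ∉ {-1, +1}, the stability level V_σ = min_{η : H(η) < H(σ)} Φ(σ,η) - H(σ) is strictly smaller than V_{-1} = max_{0 ≤ k ≤ N} H(L^(k)) - H(-1). -/
/-!
Flip the minus spins of `σ` to plus one site at a time, from left to right. When site `m` is
flipped, all sites to its left are already plus, so the current configuration dominates `L^(m)`;
as `J > 0`, the flip costs at most the ladder step `H(L^(m+1)) - H(L^(m))`, and strictly less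
if a plus spin lies to the right of `m`. The ladder steps decrease in `m`, so the cost of any set
of flips is at most a prefix sum of ladder steps, hence at most
`Γ = max_k H(L^(k)) - H(-1)`. Reversing the chain if necessary, some plus spin lies to the right
of the first flipped site, which makes the sweep from `σ` to `+1` stay strictly below
`H(σ) + Γ`. Since `H(+1) < H(σ)`, this gives `V_σ < Γ`.
-/

open Finset

/-- Long-range Ising Hamiltonian with free boundary conditions on {0,...,N-1}:
`H(σ) = -∑_{i<j} J(|i-j|) σᵢ σⱼ - h ∑ᵢ σᵢ`. -/
noncomputable def H (N : ℕ) (J : ℕ → ℝ) (h : ℝ) (σ : Fin N → ℝ) : ℝ :=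
  -(∑ i : Fin N, ∑ j : Fin N,
      if (i : ℕ) < (j : ℕ) then J (Nat.dist (i : ℕ) (j : ℕ)) * σ i * σ j else 0)
    - h * ∑ i : Fin N, σ i

/-- A spin configuration takes values in {-1, +1}. -/
def IsConfig {N : ℕ} (σ : Fin N → ℝ) : Prop := ∀ i, σ i = 1 ∨ σ i = -1

/-- The configuration `L^(k)`: +1 on the first k sites, -1 elsewhere. -/
def Lconf (N k : ℕ) : Fin N → ℝ := fun i => if (i : ℕ) < k then 1 else -1

/-- The configuration `R^(k)`: +1 on the last k sites, -1 elsewhere. -/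
def Rconf (N k : ℕ) : Fin N → ℝ := fun i => if N - k ≤ (i : ℕ) then 1 else -1

/-- Two configurations related by a single spin flip. -/
def IsFlip {N : ℕ} (a b : Fin N → ℝ) : Prop := ∃ i, b = Function.update a i (-(a i))

/-- A path of configurations joining σ to η, changing one spin at a time. -/
def IsPathFrom {N : ℕ} (γ : List (Fin N → ℝ)) (σ η : Fin N → ℝ) : Prop :=
  γ ≠ [] ∧ γ.head? = some σ ∧ γ.getLast? = some η ∧ (∀ τ ∈ γ, IsConfig τ) ∧
    List.Chain' IsFlip γ

/-- Communication height: minimal over paths from σ to η of the maximal energy along the path. -/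
noncomputable def Phi (N : ℕ) (J : ℕ → ℝ) (h : ℝ) (σ η : Fin N → ℝ) : ℝ :=
  sInf {x | ∃ γ : List (Fin N → ℝ), IsPathFrom γ σ η ∧
    x = (γ.map (H N J h)).foldr max (H N J h σ)}

/-- The stability level of `σ`: `V_σ = min_{η : H(η) < H(σ)} Φ(σ,η) - H(σ)`. -/
noncomputable def V (N : ℕ) (J : ℕ → ℝ) (h : ℝ) (σ : Fin N → ℝ) : ℝ :=
  sInf {x | ∃ η : Fin N → ℝ, IsConfig η ∧ H N J h η < H N J h σ ∧ x = Phi N J h σ η}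
    - H N J h σ

theorem List.foldr_max_lt {α : Type*} [LinearOrder α] {l : List α} {b c : α} (hb : b < c)
    (hl : ∀ a ∈ l, a < c) : l.foldr max b < c := by
  induction l with
  | nil => exact hb
  | cons a t ih =>
    exact max_lt (hl a List.mem_cons_self) (ih fun x hx => hl x (List.mem_cons_of_mem a hx))

-- The `k`-th smallest element of `s` is at least `k`.
theorem sum_le_sum_range_card {f : ℕ → ℝ} (hf : Antitone f) (s : Finset ℕ) :
    ∑ k ∈ s, f k ≤ ∑ k ∈ range #s, f k := by
  induction s using Finset.induction_on_max with
  | empty => simp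
  | insert a s hlt ih =>
    have ha : a ∉ s := fun h => lt_irrefl a (hlt a h)
    have hcard : #s ≤ a := by
      simpa using card_le_card (fun x hx => mem_range.mpr (hlt x hx) : s ⊆ range a)
    rw [sum_insert ha, card_insert_of_notMem ha, sum_range_succ]
    linarith [hf hcard]

-- The energy increment `H(L^(m+1)) - H(L^(m))` for `m < N`.
noncomputable def ladderStep (N : ℕ) (J : ℕ → ℝ) (h : ℝ) (m : ℕ) : ℝ :=
  -2 * (∑ k ∈ range m, J (1 + k) - ∑ k ∈ range (N - 1 - m), J (1 + k) + h)

noncomputable def ladderBarrier (N : ℕ) (J : ℕ → ℝ) (h : ℝ) : ℝ :=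
  (range (N + 1)).sup' nonempty_range_add_one fun m => ∑ k ∈ range m, ladderStep N J h k

section

variable {N : ℕ} {J : ℕ → ℝ} {h : ℝ}

theorem ladderStep_antitone (hpos : ∀ n, 1 ≤ n → 0 < J n) : Antitone (ladderStep N J h) := by
  refine antitone_nat_of_succ_le fun m => ?_
  have hJ : ∀ k ∈ range (N - 1 - m), 0 ≤ J (1 + k) := fun k _ => (hpos _ (by omega)).le
  have hright := sum_le_sum_of_subset_of_nonneg
    (range_subset_range.mpr (by omega : N - 1 - (m + 1) ≤ N - 1 - m)) fun k hk _ => hJ k hk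
  have hnew := hpos (1 + m) (by omega)
  simp only [ladderStep, sum_range_succ]
  linarith

theorem sum_ladderStep_le_ladderBarrier (hpos : ∀ n, 1 ≤ n → 0 < J n) {s : Finset ℕ}
    (hs : s ⊆ range N) : ∑ k ∈ s, ladderStep N J h k ≤ ladderBarrier N J h := by
  have hcard : #s < N + 1 := Nat.lt_succ_of_le ((card_le_card hs).trans_eq (card_range N))
  exact (sum_le_sum_range_card (ladderStep_antitone hpos) s).trans
    (le_sup' (fun m => ∑ k ∈ range m, ladderStep N J h k) (mem_range.mpr hcard))

theorem ladderBarrier_pos (hN : 0 < N) (hh : h < ∑ n ∈ Icc 1 (N - 1), J n) :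
    0 < ladderBarrier N J h := by
  rw [← Ico_add_one_right_eq_Icc, sum_Ico_eq_sum_range, Nat.add_sub_cancel] at hh
  refine lt_of_lt_of_le ?_ (le_sup' _ (mem_range.mpr (by omega : 1 < N + 1)))
  simp [ladderStep]
  linarith

noncomputable def localField (J : ℕ → ℝ) (τ : Fin N → ℝ) (i : Fin N) : ℝ :=
  ∑ j ∈ univ.erase i, J (Nat.dist i j) * τ j

theorem H_update (τ : Fin N → ℝ) (i : Fin N) (x : ℝ) :
    H N J h (Function.update τ i x) = H N J h τ + (τ i - x) * (localField J τ i + h) := by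
  classical
  set g : Fin N → ℝ := fun j => J (Nat.dist i j) * τ j
  have hpair : ∀ a b : Fin N,
      (if (a : ℕ) < b then J (Nat.dist a b) * Function.update τ i x a * Function.update τ i x b
        else 0) =
      (if (a : ℕ) < b then J (Nat.dist a b) * τ a * τ b else 0)
        + (x - τ i) * ((if a = i then (if (i : ℕ) < b then g b else 0) else 0)
          + (if b = i then (if (a : ℕ) < i then g a else 0) else 0)) := by
    intro a b
    split_ifs <;> subst_vars <;>
      simp_all [g, Nat.dist_comm] <;> ring_nf
  have hfield : localField J τ i = ∑ b : Fin N, (if (i : ℕ) < b then g b else 0)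
      + ∑ a : Fin N, (if (a : ℕ) < i then g a else 0) := by
    rw [localField, ← sum_add_distrib, ← sum_erase_add _ _ (mem_univ i)]
    simp only [lt_irrefl, if_false, add_zero]
    refine sum_congr rfl fun j hj => ?_
    have : (j : ℕ) ≠ i := Fin.val_ne_of_ne (ne_of_mem_erase hj)
    rcases this.lt_or_gt with hlt | hlt <;> simp [hlt, hlt.not_gt, g]
  have hspin : ∑ j, Function.update τ i x j = ∑ j, τ j + (x - τ i) := by
    rw [sum_update_of_mem (mem_univ i), ← sum_erase_add _ _ (mem_univ i),
      sdiff_singleton_eq_erase]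
    ring
  simp only [H, hpair, sum_add_distrib, ← mul_sum, hspin, hfield]
  simp [sum_ite_eq']
  ring

theorem J_dist_pos (hpos : ∀ n, 1 ≤ n → 0 < J n) {i j : Fin N} (hij : i ≠ j) :
    0 < J (Nat.dist i j) :=
  hpos _ (Nat.dist_pos_of_ne (Fin.val_ne_of_ne hij))

theorem localField_le_localField (hpos : ∀ n, 1 ≤ n → 0 < J n) {τ τ' : Fin N → ℝ}
    (hle : ∀ j, τ j ≤ τ' j) (i : Fin N) : localField J τ i ≤ localField J τ' i :=
  sum_le_sum fun j hj =>
    mul_le_mul_of_nonneg_left (hle j) (J_dist_pos hpos (ne_of_mem_erase hj).symm).le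

theorem localField_lt_localField (hpos : ∀ n, 1 ≤ n → 0 < J n) {τ τ' : Fin N → ℝ}
    (hle : ∀ j, τ j ≤ τ' j) {i j : Fin N} (hij : j ≠ i) (hlt : τ j < τ' j) :
    localField J τ i < localField J τ' i :=
  sum_lt_sum
    (fun k hk => mul_le_mul_of_nonneg_left (hle k) (J_dist_pos hpos (ne_of_mem_erase hk).symm).le)
    ⟨j, mem_erase.mpr ⟨hij, mem_univ j⟩, mul_lt_mul_of_pos_left hlt (J_dist_pos hpos hij.symm)⟩

theorem H_comp_rev (σ : Fin N → ℝ) : H N J h (σ ∘ Fin.rev) = H N J h σ := by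
  have hspin : ∑ i, (σ ∘ Fin.rev) i = ∑ i, σ i := Equiv.sum_comp Fin.revPerm σ
  have hpair : ∑ i : Fin N, ∑ j : Fin N, (if (i : ℕ) < j then
        J (Nat.dist i j) * (σ ∘ Fin.rev) i * (σ ∘ Fin.rev) j else 0) =
      ∑ i : Fin N, ∑ j : Fin N, (if (i : ℕ) < j then J (Nat.dist i j) * σ i * σ j else 0) := by
    refine (Fintype.sum_equiv Fin.revPerm _ _ fun i => Fintype.sum_equiv Fin.revPerm _ _
      fun j => ?_).trans Finset.sum_comm
    have hi := i.isLt
    have hj := j.isLt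
    simp only [Fin.revPerm_apply, Function.comp_apply, Fin.val_rev]
    by_cases hij : (i : ℕ) < j
    · have hdist : Nat.dist (N - (j + 1)) (N - (i + 1)) = Nat.dist i j := by
        unfold Nat.dist
        omega
      rw [if_pos hij, if_pos (by omega), hdist]
      ring
    · rw [if_neg hij, if_neg (by omega)]
  simp only [H, hspin, hpair]

theorem H_plus_lt (hpos : ∀ n, 1 ≤ n → 0 < J n) (hh : 0 < h) {σ : Fin N → ℝ}
    (hσ : IsConfig σ) {q : Fin N} (hq : σ q = -1) : H N J h (fun _ => 1) < H N J h σ := by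
  have hpair : ∑ i : Fin N, ∑ j : Fin N,
      (if (i : ℕ) < j then J (Nat.dist i j) * σ i * σ j else 0) ≤
      ∑ i : Fin N, ∑ j : Fin N, (if (i : ℕ) < j then J (Nat.dist i j) * 1 * 1 else 0) := by
    refine sum_le_sum fun i _ => sum_le_sum fun j _ => ?_
    split_ifs with hij
    · rw [mul_assoc, mul_assoc]
      refine mul_le_mul_of_nonneg_left ?_ (J_dist_pos hpos (Fin.ne_of_lt hij)).le
      rcases hσ i with hi | hi <;> rcases hσ j with hj | hj <;> norm_num [hi, hj]
    · rfl
  have hspin : ∑ i, σ i < ∑ _i : Fin N, (1 : ℝ) :=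
    sum_lt_sum (fun i _ => by rcases hσ i with hi | hi <;> norm_num [hi])
      ⟨q, mem_univ q, by norm_num [hq]⟩
  have := mul_lt_mul_of_pos_left hspin hh
  unfold H
  linarith

def raiseBelow (σ : Fin N → ℝ) (m : ℕ) : Fin N → ℝ :=
  fun i => if (i : ℕ) < m then 1 else σ i

theorem Lconf_eq_raiseBelow (m : ℕ) : Lconf N m = raiseBelow (fun _ => -1) m := rfl

@[simp]
theorem raiseBelow_zero (σ : Fin N → ℝ) : raiseBelow σ 0 = σ := by
  funext i
  simp [raiseBelow]

theorem raiseBelow_self (σ : Fin N → ℝ) : raiseBelow σ N = fun _ => 1 := by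
  funext i
  simp [raiseBelow, i.isLt]

@[simp]
theorem raiseBelow_apply_self {m : ℕ} (σ : Fin N → ℝ) (hm : m < N) :
    raiseBelow σ m ⟨m, hm⟩ = σ ⟨m, hm⟩ := by
  simp [raiseBelow]

theorem raiseBelow_succ {m : ℕ} (σ : Fin N → ℝ) (hm : m < N) :
    raiseBelow σ (m + 1) = Function.update (raiseBelow σ m) ⟨m, hm⟩ 1 := by
  funext j
  rcases eq_or_ne j ⟨m, hm⟩ with rfl | hj
  · simp [raiseBelow]
  · have hjm : (j : ℕ) ≠ m := fun e => hj (Fin.ext e)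
    simp only [raiseBelow, Function.update_of_ne hj]
    congr 1
    exact propext ⟨fun _ => by omega, fun _ => by omega⟩

theorem IsConfig.raiseBelow {σ : Fin N → ℝ} (hσ : IsConfig σ) (m : ℕ) :
    IsConfig (raiseBelow σ m) := by
  intro i
  unfold _root_.raiseBelow
  split_ifs
  · exact Or.inl rfl
  · exact hσ i

theorem Lconf_le_raiseBelow {σ : Fin N → ℝ} (hσ : IsConfig σ) (m : ℕ) (j : Fin N) :
    Lconf N m j ≤ raiseBelow σ m j := by
  unfold Lconf raiseBelow
  split_ifs
  · rfl
  · rcases hσ j with hj | hj <;> norm_num [hj]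

theorem localField_Lconf {m : ℕ} (hm : m < N) :
    localField J (Lconf N m) ⟨m, hm⟩ =
      ∑ k ∈ range m, J (1 + k) - ∑ k ∈ range (N - 1 - m), J (1 + k) := by
  set g : ℕ → ℝ := fun k => J (Nat.dist m k) * if k < m then 1 else -1
  have hsplit : N = (m + 1) + (N - 1 - m) := by omega
  have hleft : ∑ k ∈ range m, g k = ∑ k ∈ range m, J (1 + k) := by
    rw [← sum_range_reflect]
    refine sum_congr rfl fun k hk => ?_
    have hkm : k < m := mem_range.mp hk
    have hlt : m - 1 - k < m := by omega
    simp only [g, if_pos hlt, mul_one, Nat.dist_comm m, Nat.dist_eq_sub_of_le hlt.le]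
    congr 1
    omega
  have hright :
      ∑ k ∈ range (N - 1 - m), g (m + 1 + k) = -∑ k ∈ range (N - 1 - m), J (1 + k) := by
    rw [← sum_neg_distrib]
    refine sum_congr rfl fun k _ => ?_
    simp only [g, Nat.dist_eq_sub_of_le (by omega : m ≤ m + 1 + k),
      if_neg (by omega : ¬ m + 1 + k < m)]
    rw [show m + 1 + k - m = 1 + k by omega]
    ring
  calc localField J (Lconf N m) ⟨m, hm⟩ = ∑ j : Fin N, g j - g m := by
        rw [localField, sum_erase_eq_sub (mem_univ _)]
        rfl
    _ = _ := by
        rw [Fin.sum_univ_eq_sum_range g, hsplit, sum_range_add, sum_range_succ, hleft, hright,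
          ← hsplit]
        ring

theorem H_Lconf_succ {m : ℕ} (hm : m < N) :
    H N J h (Lconf N (m + 1)) = H N J h (Lconf N m) + ladderStep N J h m := by
  rw [Lconf_eq_raiseBelow, raiseBelow_succ _ hm, H_update, ← Lconf_eq_raiseBelow,
    localField_Lconf hm, ladderStep]
  simp [Lconf]
  ring

theorem H_Lconf {m : ℕ} (hm : m ≤ N) :
    H N J h (Lconf N m) = H N J h (fun _ => -1) + ∑ k ∈ range m, ladderStep N J h k := by
  induction m with
  | zero => rw [show Lconf N 0 = fun _ => -1 from funext fun _ => by simp [Lconf]]; simp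
  | succ m ih => rw [H_Lconf_succ hm, ih (by omega), sum_range_succ, add_assoc]

theorem sup'_H_Lconf_sub_eq_ladderBarrier :
    (range (N + 1)).sup' nonempty_range_add_one (fun k => H N J h (Lconf N k))
      - H N J h (fun _ => -1) = ladderBarrier N J h := by
  rw [sub_eq_iff_eq_add', ladderBarrier, add_sup']
  exact sup'_congr _ rfl fun m hm => H_Lconf (Nat.lt_succ_iff.mp (mem_range.mp hm))

theorem H_raiseBelow_succ {m : ℕ} {σ : Fin N → ℝ} (hm : m < N) (hσm : σ ⟨m, hm⟩ = -1) :
    H N J h (raiseBelow σ (m + 1)) = H N J h (raiseBelow σ m) + ladderStep N J h m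
      - 2 * (localField J (raiseBelow σ m) ⟨m, hm⟩ - localField J (Lconf N m) ⟨m, hm⟩) := by
  rw [raiseBelow_succ σ hm, H_update, raiseBelow_apply_self, hσm, localField_Lconf hm,
    ladderStep]
  ring

-- The first flip is strictly cheaper than its ladder step: the plus spin at `p` lies to its right.
theorem exists_H_raiseBelow_le (hpos : ∀ n, 1 ≤ n → 0 < J n) {σ : Fin N → ℝ} (hσ : IsConfig σ)
    {q p : Fin N} (hq : σ q = -1) (hp : σ p = 1) (hqp : q < p) (m : ℕ) (hm : m ≤ N) :
    ∃ s ⊆ range m, H N J h (raiseBelow σ m) ≤ H N J h σ + ∑ k ∈ s, ladderStep N J h k ∧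
      (raiseBelow σ m ≠ σ →
        H N J h (raiseBelow σ m) < H N J h σ + ∑ k ∈ s, ladderStep N J h k) := by
  induction m with
  | zero => exact ⟨∅, empty_subset _, by simp, fun hne => (hne (raiseBelow_zero σ)).elim⟩
  | succ m ih =>
    have hmN : m < N := by omega
    obtain ⟨s, hs, hle, hlt⟩ := ih hmN.le
    have hs' : s ⊆ range (m + 1) := hs.trans (range_subset_range.mpr m.le_succ)
    rcases hσ ⟨m, hmN⟩ with hplus | hminus
    · have hsame : raiseBelow σ (m + 1) = raiseBelow σ m := by
        rw [raiseBelow_succ σ hmN, Function.update_eq_self_iff, raiseBelow_apply_self, hplus]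
      exact ⟨s, hs', hsame ▸ hle, hsame ▸ hlt⟩
    have hms : m ∉ s := fun hm => lt_irrefl m (mem_range.mp (hs hm))
    have hmono := localField_le_localField (J := J) hpos (Lconf_le_raiseBelow hσ m) ⟨m, hmN⟩
    have hstep := H_raiseBelow_succ (J := J) (h := h) hmN hminus
    refine ⟨insert m s, insert_subset (self_mem_range_succ m) hs', ?_, fun _ => ?_⟩ <;>
      rw [sum_insert hms]
    · linarith
    · by_cases hfix : raiseBelow σ m = σ
      · have hmq : m ≤ q := by
          by_contra hqm
          have := congr_fun hfix q
          norm_num [raiseBelow, show (q : ℕ) < m by omega, hq] at this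
        have hstrict := localField_lt_localField (J := J) hpos (Lconf_le_raiseBelow hσ m)
          (i := ⟨m, hmN⟩) (j := p) (fun e => by simp [Fin.ext_iff] at e; omega)
          (by simp [Lconf, raiseBelow, show ¬ (p : ℕ) < m by omega, hp])
        linarith
      · linarith [hlt hfix]

theorem IsPathFrom.singleton {σ : Fin N → ℝ} (hσ : IsConfig σ) : IsPathFrom [σ] σ σ :=
  ⟨List.cons_ne_nil _ _, rfl, rfl, by simpa using hσ, List.isChain_singleton σ⟩

theorem IsPathFrom.head_mem {γ : List (Fin N → ℝ)} {σ η : Fin N → ℝ} (hγ : IsPathFrom γ σ η) :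
    σ ∈ γ :=
  List.mem_of_mem_head? hγ.2.1

theorem IsPathFrom.snoc {γ : List (Fin N → ℝ)} {σ τ τ' : Fin N → ℝ} (hγ : IsPathFrom γ σ τ)
    (hτ' : IsConfig τ') (hflip : IsFlip τ τ') : IsPathFrom (γ ++ [τ']) σ τ' := by
  obtain ⟨hne, hhead, hlast, hcfg, hchain⟩ := hγ
  refine ⟨by simp, by rw [List.head?_append_of_ne_nil _ hne, hhead], List.getLast?_concat,
    fun x hx => ?_, ?_⟩
  · rcases List.mem_append.mp hx with hx | hx
    · exact hcfg x hx
    · rw [List.mem_singleton.mp hx]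
      exact hτ'
  · rw [List.Chain', List.isChain_append]
    refine ⟨hchain, List.isChain_singleton _, fun x hx y hy => ?_⟩
    rw [hlast, Option.mem_some_iff] at hx
    simp only [List.head?_cons, Option.mem_some_iff] at hy
    exact hx ▸ hy ▸ hflip

theorem IsPathFrom.comp_rev {γ : List (Fin N → ℝ)} {σ η : Fin N → ℝ} (hγ : IsPathFrom γ σ η) :
    IsPathFrom (γ.map (· ∘ Fin.rev)) (σ ∘ Fin.rev) (η ∘ Fin.rev) := by
  obtain ⟨hne, hhead, hlast, hcfg, hchain⟩ := hγ
  refine ⟨by simpa using hne, by simp [List.head?_map, hhead], by simp [List.getLast?_map, hlast],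
    ?_, ?_⟩
  · simp only [List.mem_map]
    rintro _ ⟨τ, hτ, rfl⟩ i
    exact hcfg τ hτ _
  · refine List.isChain_map _ |>.mpr (hchain.imp ?_)
    rintro a b ⟨i, rfl⟩
    refine ⟨Fin.rev i, ?_⟩
    have := Function.update_comp_eq_of_injective a Fin.rev_injective (Fin.rev i) (-(a i))
    rw [Fin.rev_rev] at this
    simpa using this

theorem exists_path_raiseBelow {σ : Fin N → ℝ} (hσ : IsConfig σ) (m : ℕ) (hm : m ≤ N) :
    ∃ γ, IsPathFrom γ σ (raiseBelow σ m) ∧ ∀ τ ∈ γ, ∃ k ≤ N, τ = raiseBelow σ k := by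
  induction m with
  | zero =>
    refine ⟨[σ], by simpa using IsPathFrom.singleton hσ, fun τ hτ => ⟨0, N.zero_le, ?_⟩⟩
    simpa using hτ
  | succ m ih =>
    have hmN : m < N := by omega
    obtain ⟨γ, hγ, hmem⟩ := ih hmN.le
    rcases hσ ⟨m, hmN⟩ with hplus | hminus
    · have hsame : raiseBelow σ (m + 1) = raiseBelow σ m := by
        rw [raiseBelow_succ σ hmN, Function.update_eq_self_iff, raiseBelow_apply_self, hplus]
      exact ⟨γ, hsame ▸ hγ, hmem⟩
    refine ⟨γ ++ [raiseBelow σ (m + 1)], hγ.snoc (hσ.raiseBelow _) ⟨⟨m, hmN⟩, ?_⟩, ?_⟩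
    · rw [raiseBelow_succ σ hmN, raiseBelow_apply_self, hminus, neg_neg]
    · intro τ hτ
      rcases List.mem_append.mp hτ with hτ | hτ
      · exact hmem τ hτ
      · exact ⟨m + 1, hm, List.mem_singleton.mp hτ⟩

theorem exists_path_to_plus_of_lt (hpos : ∀ n, 1 ≤ n → 0 < J n)
    (hh : h < ∑ n ∈ Icc 1 (N - 1), J n) {σ : Fin N → ℝ} (hσ : IsConfig σ) {q p : Fin N}
    (hq : σ q = -1) (hp : σ p = 1) (hqp : q < p) :
    ∃ γ, IsPathFrom γ σ (fun _ => 1) ∧ ∀ τ ∈ γ, H N J h τ < H N J h σ + ladderBarrier N J h := by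
  obtain ⟨γ, hγ, hmem⟩ := exists_path_raiseBelow hσ N le_rfl
  refine ⟨γ, raiseBelow_self σ ▸ hγ, fun τ hτ => ?_⟩
  obtain ⟨k, hk, rfl⟩ := hmem τ hτ
  obtain ⟨s, hs, -, hlt⟩ := exists_H_raiseBelow_le (h := h) hpos hσ hq hp hqp k hk
  by_cases hfix : raiseBelow σ k = σ
  · rw [hfix]
    linarith [ladderBarrier_pos q.pos hh]
  · linarith [hlt hfix, sum_ladderStep_le_ladderBarrier (h := h) hpos
      (hs.trans (range_subset_range.mpr hk))]

theorem exists_path_to_plus (hpos : ∀ n, 1 ≤ n → 0 < J n)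
    (hh : h < ∑ n ∈ Icc 1 (N - 1), J n) {σ : Fin N → ℝ} (hσ : IsConfig σ) {q p : Fin N}
    (hq : σ q = -1) (hp : σ p = 1) :
    ∃ γ, IsPathFrom γ σ (fun _ => 1) ∧ ∀ τ ∈ γ, H N J h τ < H N J h σ + ladderBarrier N J h := by
  have hqp : q ≠ p := by
    rintro rfl
    norm_num [hq] at hp
  rcases hqp.lt_or_gt with hqp | hpq
  · exact exists_path_to_plus_of_lt hpos hh hσ hq hp hqp
  obtain ⟨γ, hγ, hlow⟩ := exists_path_to_plus_of_lt hpos hh (σ := σ ∘ Fin.rev)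
    (fun i => hσ _) (q := q.rev) (p := p.rev) (by simpa using hq) (by simpa using hp)
    (Fin.rev_lt_rev.mpr hpq)
  refine ⟨γ.map (· ∘ Fin.rev), by simpa [Function.comp_def] using hγ.comp_rev, ?_⟩
  simp only [List.mem_map]
  rintro _ ⟨τ, hτ, rfl⟩
  simpa only [H_comp_rev] using hlow τ hτ

theorem IsPathFrom.H_le_foldr_max {γ : List (Fin N → ℝ)} {σ η : Fin N → ℝ}
    (hγ : IsPathFrom γ σ η) : H N J h σ ≤ (γ.map (H N J h)).foldr max (H N J h σ) :=
  List.le_max_of_le' _ (List.mem_map_of_mem hγ.head_mem) le_rfl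

-- `Phi` is `sInf ∅ = 0` when no path exists, hence the `min` with `0`.
theorem min_le_Phi (σ η : Fin N → ℝ) : min (H N J h σ) 0 ≤ Phi N J h σ η := by
  unfold Phi
  set S := {x | ∃ γ : List (Fin N → ℝ), IsPathFrom γ σ η ∧
    x = (γ.map (H N J h)).foldr max (H N J h σ)}
  rcases S.eq_empty_or_nonempty with hS | hS
  · rw [hS, Real.sInf_empty]
    exact min_le_right _ _
  · refine (min_le_left _ _).trans (le_csInf hS ?_)
    rintro _ ⟨γ, hγ, rfl⟩
    exact hγ.H_le_foldr_max

theorem V_lt_of_path {c : ℝ} {γ : List (Fin N → ℝ)} {σ η : Fin N → ℝ} (hη : IsConfig η)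
    (hlt : H N J h η < H N J h σ) (hγ : IsPathFrom γ σ η) (hc : ∀ τ ∈ γ, H N J h τ < c) :
    V N J h σ < c - H N J h σ := by
  have hPhi : Phi N J h σ η ≤ (γ.map (H N J h)).foldr max (H N J h σ) := by
    refine csInf_le ⟨H N J h σ, ?_⟩ ⟨γ, hγ, rfl⟩
    rintro _ ⟨γ', hγ', rfl⟩
    exact hγ'.H_le_foldr_max
  have hmax : (γ.map (H N J h)).foldr max (H N J h σ) < c := by
    refine List.foldr_max_lt (hc σ hγ.head_mem) ?_
    simp only [List.mem_map]
    rintro _ ⟨τ, hτ, rfl⟩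
    exact hc τ hτ
  have hV : sInf {x | ∃ η, IsConfig η ∧ H N J h η < H N J h σ ∧ x = Phi N J h σ η}
      ≤ Phi N J h σ η := by
    refine csInf_le ⟨min (H N J h σ) 0, ?_⟩ ⟨η, hη, hlt, rfl⟩
    rintro _ ⟨η', -, -, rfl⟩
    exact min_le_Phi σ η'
  unfold V
  linarith

end

/-- Theorem 3.1(3): every configuration different from the all-minus and all-plus ones
has stability level strictly smaller than `V_{-1} = max_k H(L^(k)) - H(-1)`. -/
theorem stability_level_lt (N : ℕ) (J : ℕ → ℝ)
    (hpos : ∀ n, 1 ≤ n → 0 < J n)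
    (h : ℝ) (hh0 : 0 < h) (hh1 : h < ∑ n ∈ Finset.Icc 1 (N - 1), J n)
    (σ : Fin N → ℝ) (hσ : IsConfig σ)
    (hne₁ : σ ≠ fun _ => -1) (hne₂ : σ ≠ fun _ => 1) :
    V N J h σ <
      (Finset.range (N + 1)).sup' (by simp) (fun k => H N J h (Lconf N k))
        - H N J h (fun _ => -1) := by
  obtain ⟨q, hq⟩ : ∃ q, σ q = -1 := by
    obtain ⟨i, hi⟩ := Function.ne_iff.mp hne₂
    exact ⟨i, (hσ i).resolve_left hi⟩
  obtain ⟨p, hp⟩ : ∃ p, σ p = 1 := by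
    obtain ⟨i, hi⟩ := Function.ne_iff.mp hne₁
    exact ⟨i, (hσ i).resolve_right hi⟩
  obtain ⟨γ, hγ, hlow⟩ := exists_path_to_plus hpos hh1 hσ hq hp
  have hV := V_lt_of_path (fun _ => Or.inl rfl) (H_plus_lt hpos hh0 hσ hq) hγ hlow
  rw [sup'_H_Lconf_sub_eq_ladderBarrier]
  linarith
end

section
/- Assume J positive, strictly decreasing, 0 < h < ∑_{n=1}^{N-1} J(n), and let f(k) = H(L^(k)), L = ⌊N/2⌋. If h_k^(N) < h < h_{k-1}^(N) for some k ∈ {1,...,L-1}, then f(k) > f(i) for all i ∈ {0,...,N} with i ≠ k, i.e., f attains a unique strict global maximum at k. -/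
open Finset

/-- The thresholds `h_k^(N) = ∑_{n=1}^{N-k-1} J(n) - ∑_{n=1}^{k} J(n)`. -/
noncomputable def hthr (N : ℕ) (J : ℕ → ℝ) (k : ℕ) : ℝ :=
  (∑ n ∈ Finset.Icc 1 (N - k - 1), J n) - ∑ n ∈ Finset.Icc 1 k, J n

lemma icc_as_range (J : ℕ → ℝ) (m : ℕ) :
    ∑ n ∈ Icc 1 m, J n = ∑ i ∈ range m, J (i + 1) := by
  rw [← Finset.Ico_add_one_right_eq_Icc, Finset.sum_Ico_eq_sum_range]
  simp [add_comm]

lemma sumA (N : ℕ) (J : ℕ → ℝ) (m : ℕ) (hm : m < N) :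
    ∑ i : Fin N, (if (i : ℕ) < m then J (Nat.dist (i : ℕ) m) else 0)
      = ∑ n ∈ Icc 1 m, J n := by
  have h0 := Fin.sum_univ_eq_sum_range (fun n => if n < m then J (Nat.dist n m) else 0) N
  rw [h0]
  rw [← Finset.sum_subset (Finset.range_subset_range.2 hm.le)
      (by intro x hx hx2; simp only [mem_range] at hx2; simp [if_neg hx2])]
  rw [icc_as_range]
  rw [← Finset.sum_range_reflect (fun i => J (i + 1)) m]
  apply Finset.sum_congr rfl
  intro i hi
  simp only [mem_range] at hi
  have : (i : ℕ) < m := hi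
  rw [if_pos this]
  congr 1
  rw [Nat.dist_eq_sub_of_le this.le]
  omega

lemma sumB (N : ℕ) (J : ℕ → ℝ) (m : ℕ) :
    ∑ j : Fin N, (if m < (j : ℕ) then J (Nat.dist m (j : ℕ)) else 0)
      = ∑ n ∈ Icc 1 (N - m - 1), J n := by
  have h0 := Fin.sum_univ_eq_sum_range (fun n => if m < n then J (Nat.dist m n) else 0) N
  rw [h0]
  have hsub : Ico (m+1) N ⊆ range N := by
    intro x hx; simp only [mem_Ico] at hx; simp [hx.2]
  rw [← Finset.sum_subset hsub
      (by intro x hx hx2; simp only [mem_Ico, mem_range] at hx hx2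
          have : ¬ m < x := by omega
          simp [this])]
  rw [Finset.sum_Ico_eq_sum_range]
  rw [icc_as_range]
  apply Finset.sum_congr rfl
  intro i hi
  have h1 : m < m + 1 + i := by omega
  rw [if_pos h1]
  congr 1
  rw [Nat.dist_eq_sub_of_le (by omega)]
  omega

lemma Lconf_eq_of_ne (N m : ℕ) (i : Fin N) (hi : (i : ℕ) ≠ m) :
    Lconf N (m+1) i = Lconf N m i := by
  unfold Lconf
  rcases lt_or_ge (i : ℕ) m with h1 | h1
  · simp [h1, Nat.lt_succ_of_lt h1]
  · have h2 : ¬ (i : ℕ) < m := not_lt.2 h1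
    have h3 : ¬ (i : ℕ) < m + 1 := by omega
    simp [h2, h3]

lemma H_step (N : ℕ) (J : ℕ → ℝ) (h : ℝ) (m : ℕ) (hm : m < N) :
    H N J h (Lconf N (m+1)) = H N J h (Lconf N m) + 2 * (hthr N J m - h) := by
  set m' : Fin N := ⟨m, hm⟩ with hm'
  have hvm : (m' : ℕ) = m := rfl
  have hσ'm : Lconf N (m+1) m' = 1 := by simp [Lconf, hvm]
  have hσm : Lconf N m m' = -1 := by simp [Lconf, hvm]
  have hs : ∑ i : Fin N, Lconf N (m+1) i = (∑ i : Fin N, Lconf N m i) + 2 := by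
    have hd : ∑ i : Fin N, (Lconf N (m+1) i - Lconf N m i) = 2 := by
      rw [Finset.sum_eq_single m']
      · rw [hσ'm, hσm]; norm_num
      · intro b _ hb
        have hbm : (b : ℕ) ≠ m := fun hc => hb (Fin.ext hc)
        rw [Lconf_eq_of_ne N m b hbm]; ring
      · intro hc; exact absurd (mem_univ m') hc
    rw [Finset.sum_sub_distrib] at hd
    linarith
  have hT : (∑ i : Fin N, ∑ j : Fin N,
        if (i : ℕ) < (j : ℕ) then J (Nat.dist (i : ℕ) (j : ℕ)) * Lconf N (m+1) i * Lconf N (m+1) j else 0)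
      = (∑ i : Fin N, ∑ j : Fin N,
        if (i : ℕ) < (j : ℕ) then J (Nat.dist (i : ℕ) (j : ℕ)) * Lconf N m i * Lconf N m j else 0)
        - 2 * hthr N J m := by
    have hdiff : (∑ i : Fin N, ∑ j : Fin N,
        ((if (i : ℕ) < (j : ℕ) then J (Nat.dist (i : ℕ) (j : ℕ)) * Lconf N (m+1) i * Lconf N (m+1) j else 0)
          - (if (i : ℕ) < (j : ℕ) then J (Nat.dist (i : ℕ) (j : ℕ)) * Lconf N m i * Lconf N m j else 0)))
        = -2 * hthr N J m := by
      rw [Finset.sum_eq_sum_sdiff_singleton_add (mem_univ m')]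
      have h1 : ∀ i ∈ univ \ {m'}, (∑ j : Fin N,
          ((if (i : ℕ) < (j : ℕ) then J (Nat.dist (i : ℕ) (j : ℕ)) * Lconf N (m+1) i * Lconf N (m+1) j else 0)
            - (if (i : ℕ) < (j : ℕ) then J (Nat.dist (i : ℕ) (j : ℕ)) * Lconf N m i * Lconf N m j else 0)))
          = (if (i : ℕ) < m then 2 * J (Nat.dist (i : ℕ) m) else 0) := by
        intro i hi
        have him : (i : ℕ) ≠ m := by
          intro hc
          simp only [mem_sdiff, mem_singleton] at hi
          exact hi.2 (Fin.ext hc)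
        rw [Finset.sum_eq_single m']
        · by_cases hc : (i : ℕ) < m
          · have hc' : (i : ℕ) < (m' : ℕ) := hc
            rw [if_pos hc', if_pos hc', if_pos hc, hσ'm, hσm,
              Lconf_eq_of_ne N m i him]
            have : Lconf N m i = 1 := by simp [Lconf, hc]
            rw [this, hvm]; ring
          · have hc' : ¬ (i : ℕ) < (m' : ℕ) := hc
            rw [if_neg hc', if_neg hc', if_neg hc]; ring
        · intro b _ hb
          have hbm : (b : ℕ) ≠ m := fun hc => hb (Fin.ext hc)
          rw [Lconf_eq_of_ne N m b hbm, Lconf_eq_of_ne N m i him]; ring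
        · intro hc; exact absurd (mem_univ m') hc
      rw [Finset.sum_congr rfl h1]
      have h2 : (∑ j : Fin N,
          ((if (m' : ℕ) < (j : ℕ) then J (Nat.dist (m' : ℕ) (j : ℕ)) * Lconf N (m+1) m' * Lconf N (m+1) j else 0)
            - (if (m' : ℕ) < (j : ℕ) then J (Nat.dist (m' : ℕ) (j : ℕ)) * Lconf N m m' * Lconf N m j else 0)))
          = ∑ j : Fin N, (if m < (j : ℕ) then (-2) * J (Nat.dist m (j : ℕ)) else 0) := by
        apply Finset.sum_congr rfl
        intro j _
        by_cases hc : m < (j : ℕ)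
        · have hc' : (m' : ℕ) < (j : ℕ) := hc
          have hjm : (j : ℕ) ≠ m := by omega
          have hj1 : Lconf N m j = -1 := by
            have : ¬ (j : ℕ) < m := by omega
            simp [Lconf, this]
          rw [if_pos hc', if_pos hc', if_pos hc, hσ'm, hσm,
            Lconf_eq_of_ne N m j hjm, hj1, hvm]
          ring
        · have hc' : ¬ (m' : ℕ) < (j : ℕ) := hc
          rw [if_neg hc', if_neg hc', if_neg hc]; ring
      rw [h2]
      have h3 : (∑ i ∈ univ \ {m'}, (if (i : ℕ) < m then 2 * J (Nat.dist (i : ℕ) m) else 0))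
          = ∑ i : Fin N, (if (i : ℕ) < m then 2 * J (Nat.dist (i : ℕ) m) else 0) := by
        rw [Finset.sum_eq_sum_sdiff_singleton_add (mem_univ m')
          (fun i => if (i : ℕ) < m then 2 * J (Nat.dist (i : ℕ) m) else 0)]
        simp [hvm]
      rw [h3]
      have h4 : (∑ i : Fin N, (if (i : ℕ) < m then 2 * J (Nat.dist (i : ℕ) m) else 0))
          = 2 * ∑ n ∈ Icc 1 m, J n := by
        rw [← sumA N J m hm, Finset.mul_sum]
        apply Finset.sum_congr rfl
        intro i _
        by_cases hc : (i : ℕ) < m <;> simp [hc]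
      have h5 : (∑ j : Fin N, (if m < (j : ℕ) then (-2) * J (Nat.dist m (j : ℕ)) else 0))
          = (-2) * ∑ n ∈ Icc 1 (N - m - 1), J n := by
        rw [← sumB N J m, Finset.mul_sum]
        apply Finset.sum_congr rfl
        intro j _
        by_cases hc : m < (j : ℕ) <;> simp [hc]
      rw [h4, h5]
      unfold hthr
      ring
    simp only [Finset.sum_sub_distrib] at hdiff
    linarith
  unfold H
  rw [hT, hs]
  ring

lemma hthr_step (N : ℕ) (J : ℕ → ℝ) (hpos : ∀ n, 1 ≤ n → 0 < J n)
    (a : ℕ) (ha : a + 1 ≤ N - 1) : hthr N J (a+1) < hthr N J a := by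
  have hN2 : a + 2 ≤ N := by omega
  have e1 : N - a - 1 = (N - a - 2) + 1 := by omega
  have e2 : N - (a+1) - 1 = N - a - 2 := by omega
  unfold hthr
  rw [e2, e1, Finset.sum_Icc_succ_top (by omega : 1 ≤ N - a - 2 + 1),
    Finset.sum_Icc_succ_top (by omega : 1 ≤ a + 1)]
  have p1 := hpos (N - a - 2 + 1) (by omega)
  have p2 := hpos (a+1) (by omega)
  linarith

lemma hthr_anti (N : ℕ) (J : ℕ → ℝ) (hpos : ∀ n, 1 ≤ n → 0 < J n) :
    ∀ b a, a ≤ b → b ≤ N - 1 → hthr N J b ≤ hthr N J a := by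
  intro b
  induction b with
  | zero => intro a ha _; rw [show a = 0 by omega]
  | succ n ih =>
    intro a ha hb
    rcases Nat.eq_or_lt_of_le ha with h | hlt
    · subst h; exact le_rfl
    · exact le_trans (hthr_step N J hpos n hb).le (ih a (by omega) (by omega))

/-- Proposition 3.2, case 2: if `h_k^(N) < h < h_{k-1}^(N)` for some `1 ≤ k ≤ ⌊N/2⌋ - 1`,
then `f(k) = H(L^(k))` attains a unique strict global maximum at `k`. -/
theorem unique_max_at_k (N : ℕ) (hN : 2 ≤ N) (J : ℕ → ℝ)
    (hpos : ∀ n, 1 ≤ n → 0 < J n) (hdec : ∀ n, 1 ≤ n → J (n + 1) < J n)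
    (h : ℝ) (hh0 : 0 < h) (hh1 : h < ∑ n ∈ Finset.Icc 1 (N - 1), J n)
    (k : ℕ) (hk1 : 1 ≤ k) (hk2 : k ≤ N / 2 - 1)
    (hlo : hthr N J k < h) (hhi : h < hthr N J (k - 1)) :
    ∀ i, i ≤ N → i ≠ k → H N J h (Lconf N i) < H N J h (Lconf N k) := by
  have hN4 : 4 ≤ N := by omega
  have hkle : k + 1 ≤ N - 1 := by omega
  have hup : ∀ m, m < k → h < hthr N J m := by
    intro m hm
    calc h < hthr N J (k-1) := hhi
    _ ≤ hthr N J m := hthr_anti N J hpos (k-1) m (by omega) (by omega)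
  have hdown : ∀ m, k ≤ m → m ≤ N - 1 → hthr N J m < h := by
    intro m h1 h2
    calc hthr N J m ≤ hthr N J k := hthr_anti N J hpos m k h1 h2
    _ < h := hlo
  have fup : ∀ j, j ≤ k → ∀ i, i < j → H N J h (Lconf N i) < H N J h (Lconf N j) := by
    intro j
    induction j with
    | zero => intro _ i hi; omega
    | succ n ih =>
      intro hjk i hi
      have hstep : H N J h (Lconf N n) < H N J h (Lconf N (n+1)) := by
        rw [H_step N J h n (by omega)]
        have := hup n (by omega)
        linarith
      rcases (by omega : i < n ∨ i = n) with h' | h'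
      · exact lt_trans (ih (by omega) i h') hstep
      · subst h'; exact hstep
  have fdown : ∀ j, j ≤ N → k < j → H N J h (Lconf N j) < H N J h (Lconf N k) := by
    intro j
    induction j with
    | zero => omega
    | succ n ih =>
      intro hjN hkj
      have hstep : H N J h (Lconf N (n+1)) < H N J h (Lconf N n) := by
        rw [H_step N J h n (by omega)]
        have := hdown n (by omega) (by omega)
        linarith
      rcases (by omega : k < n ∨ k = n) with h' | h'
      · exact lt_trans hstep (ih (by omega) h')
      · subst h'; exact hstep
  intro i hiN hik
  rcases lt_or_gt_of_ne hik with h' | h'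
  · exact fup k le_rfl i h'
  · exact fdown i hiN h'
end
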